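/- arXiv:2604.08096 — 2 statements merged into one kernel-verified Lean document; each statement's English description precedes it below -/
import Mathlib

section
/- Let x be a norm on ℝ^d that takes integer values on every point of the lattice ℤ^d. Then the unit ball of the dual norm x* is the convex hull of finitely many points of ℤ^d; in particular it is a compact convex polytope with vertices in ℤ^d. -/
open Finset

namespace Stmt0Aux

lemma exists_limit (F : ℕ → ℤ) (hstep : ∀ k, F (k+1) ≤ F k) (C : ℤ) (hC : ∀ k, C ≤ F k) :
    ∃ V, (∃ K, ∀ k, K ≤ k → F k = V) ∧ (∀ k, V ≤ F k) := by
  classical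
  have hanti : Antitone F := antitone_nat_of_succ_le hstep
  obtain ⟨lb, ⟨K, hK⟩, hmin⟩ := Int.exists_least_of_bdd (P := fun z => z ∈ Set.range F)
    ⟨C, by rintro z ⟨k, rfl⟩; exact hC k⟩ ⟨F 0, 0, rfl⟩
  refine ⟨lb, ⟨K, fun k hk => le_antisymm (hK ▸ hanti hk) (hmin _ ⟨k, rfl⟩)⟩,
    fun k => hmin _ ⟨k, rfl⟩⟩

variable {d : ℕ}

def AddV (μ : (Fin d → ℤ) → ℤ) (v : Fin d → ℤ) : Prop :=
  ∀ γ (t : ℤ), μ (γ + t • v) = μ γ + t * μ v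

def Sublin (μ : (Fin d → ℤ) → ℤ) : Prop :=
  (∀ a b, μ (a + b) ≤ μ a + μ b) ∧ (∀ (n : ℕ) a, μ ((n : ℤ) • a) = (n : ℤ) * μ a)

lemma step (μ : (Fin d → ℤ) → ℤ) (hμ : Sublin μ) (β : Fin d → ℤ) :
    ∃ μ' : (Fin d → ℤ) → ℤ, Sublin μ' ∧ (∀ a, μ' a ≤ μ a) ∧ AddV μ' β ∧ μ' β = μ β ∧
      ∀ w, AddV μ w → (μ' w = μ w ∧ AddV μ' w) := by
  classical
  obtain ⟨hsub, hhom⟩ := hμ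
  set c : ℤ := μ β with hc
  have hkc : ∀ k : ℕ, μ ((k : ℤ) • β) = (k : ℤ) * c := fun k => hhom k β
  set F : (Fin d → ℤ) → ℕ → ℤ := fun γ k => μ ((k : ℤ) • β + γ) - (k : ℤ) * c with hF
  have hstep : ∀ γ k, F γ (k+1) ≤ F γ k := by
    intro γ k
    have h1 : ((k:ℕ)+1 : ℤ) • β + γ = β + ((k : ℤ) • β + γ) := by
      rw [add_smul, one_smul]; abel
    have h2 := hsub β ((k : ℤ) • β + γ)
    simp only [hF]
    push_cast
    rw [h1]
    push_cast at h2 ⊢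
    linarith
  have hbdd : ∀ γ k, -μ (-γ) ≤ F γ k := by
    intro γ k
    have h1 : (k : ℤ) • β = ((k : ℤ) • β + γ) + (-γ) := by abel
    have := hsub ((k : ℤ) • β + γ) (-γ)
    rw [← h1, hkc k] at this
    simp only [hF]; linarith
  have H : ∀ γ, ∃ V, (∃ K, ∀ k, K ≤ k → F γ k = V) ∧ (∀ k, V ≤ F γ k) :=
    fun γ => exists_limit (F γ) (hstep γ) _ (hbdd γ)
  choose μ' hev hlb using H
  have hF0 : ∀ γ, F γ 0 = μ γ := by
    intro γ
    simp only [hF]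
    rw [Nat.cast_zero, zero_smul, zero_add, zero_mul, sub_zero]
  have hle : ∀ γ, μ' γ ≤ μ γ := fun γ => (hF0 γ) ▸ hlb γ 0
  have hμ'β : μ' β = c := by
    obtain ⟨K, hK⟩ := hev β
    have hv : F β K = c := by
      have h1 : (K : ℤ) • β + β = ((K+1 : ℕ) : ℤ) • β := by push_cast; rw [add_smul, one_smul]
      simp only [hF, h1, hkc]; push_cast; ring
    rw [← hK K le_rfl, hv]
  have hsub' : ∀ a b, μ' (a + b) ≤ μ' a + μ' b := by
    intro a b
    obtain ⟨K₁, h1⟩ := hev a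
    obtain ⟨K₂, h2⟩ := hev b
    obtain ⟨K₃, h3⟩ := hev (a + b)
    set k := K₁ + K₂ + K₃ with hk
    have e1 : ((k + k : ℕ) : ℤ) • β + (a + b) = ((k : ℤ) • β + a) + ((k : ℤ) • β + b) := by
      push_cast; rw [add_smul]; abel
    have hthis := hsub ((k : ℤ) • β + a) ((k : ℤ) • β + b)
    rw [← e1] at hthis
    have hval : F (a+b) (k+k) = μ' (a+b) := h3 _ (by omega)
    have hva : F a k = μ' a := h1 _ (by omega)
    have hvb : F b k = μ' b := h2 _ (by omega)
    simp only [hF] at hval hva hvb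
    push_cast at hthis hval hva hvb
    ring_nf at hthis hval hva hvb ⊢
    linarith
  have hhom' : ∀ (n : ℕ) a, μ' ((n : ℤ) • a) = (n : ℤ) * μ' a := by
    intro n a
    rcases Nat.eq_zero_or_pos n with rfl | hn
    · obtain ⟨K, hK⟩ := hev (((0:ℕ):ℤ) • (0 : Fin d → ℤ))
      have h0 : ((0:ℕ):ℤ) • a = ((0:ℕ):ℤ) • (0 : Fin d → ℤ) := by
        rw [Nat.cast_zero, zero_smul, zero_smul]
      rw [h0]
      have hv : F (((0:ℕ):ℤ) • (0 : Fin d → ℤ)) K = 0 := by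
        have h1 : (K : ℤ) • β + ((0:ℕ):ℤ) • (0 : Fin d → ℤ) = (K : ℤ) • β := by
          rw [Nat.cast_zero, zero_smul, add_zero]
        simp only [hF, h1, hkc]; ring
      rw [← hK K le_rfl, hv, Nat.cast_zero, zero_mul]
    · obtain ⟨K₁, h1⟩ := hev a
      obtain ⟨K₂, h2⟩ := hev ((n : ℤ) • a)
      set k := K₁ + K₂ + 1 with hkdef
      have hva : F a k = μ' a := h1 _ (by omega)
      have hvna : F ((n : ℤ) • a) (n * k) = μ' ((n : ℤ) • a) := h2 _ (by nlinarith)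
      have e1 : ((n * k : ℕ) : ℤ) • β + (n : ℤ) • a = (n : ℤ) • ((k : ℤ) • β + a) := by
        push_cast; rw [smul_add, smul_smul]
      have e2 : μ ((n : ℤ) • ((k : ℤ) • β + a)) = (n : ℤ) * μ ((k : ℤ) • β + a) := hhom n _
      simp only [hF] at hva hvna
      rw [e1, e2] at hvna
      push_cast at hva hvna
      linear_combination (n:ℤ) * hva - hvna
  have haddβ : AddV μ' β := by
    intro γ t
    obtain ⟨K₁, h1⟩ := hev γ
    obtain ⟨K₂, h2⟩ := hev (γ + t • β)
    set k := K₁ + K₂ + t.natAbs with hkdef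
    have hk0 : (0:ℤ) ≤ (k : ℤ) + t := by simp only [hkdef]; omega
    set j : ℕ := ((k : ℤ) + t).toNat with hjdef
    have hj : (j : ℤ) = (k : ℤ) + t := Int.toNat_of_nonneg hk0
    have hjK : K₁ ≤ j := by simp only [hjdef, hkdef]; omega
    have e1 : (k : ℤ) • β + (γ + t • β) = (j : ℤ) • β + γ := by
      rw [hj, add_smul]; abel
    have hval : F (γ + t • β) k = μ' (γ + t • β) := h2 _ (by omega)
    have hvj : F γ j = μ' γ := h1 _ hjK
    simp only [hF] at hval hvj
    rw [e1] at hval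
    rw [hμ'β]
    have : (j:ℤ) * c = (k:ℤ) * c + t * c := by rw [hj]; ring
    linarith
  have hpres : ∀ w, AddV μ w → (μ' w = μ w ∧ AddV μ' w) := by
    intro w hw
    have hμ'w : μ' w = μ w := by
      obtain ⟨K, hK⟩ := hev w
      have hv : F w K = μ w := by
        have h1 : (K : ℤ) • β + w = (K : ℤ) • β + (1:ℤ) • w := by rw [one_smul]
        simp only [hF, h1, hw ((K:ℤ) • β) 1, hkc]; ring
      rw [← hK K le_rfl, hv]
    refine ⟨hμ'w, ?_⟩
    intro γ t
    obtain ⟨K₁, h1⟩ := hev γ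
    obtain ⟨K₂, h2⟩ := hev (γ + t • w)
    set k := K₁ + K₂ with hkdef
    have hval : F (γ + t • w) k = μ' (γ + t • w) := h2 _ (by omega)
    have hvk : F γ k = μ' γ := h1 _ (by omega)
    have e1 : (k : ℤ) • β + (γ + t • w) = ((k : ℤ) • β + γ) + t • w := by abel
    simp only [hF] at hval hvk
    rw [e1, hw ((k:ℤ) • β + γ) t] at hval
    rw [hμ'w]
    linarith
  exact ⟨μ', ⟨hsub', hhom'⟩, hle, haddβ, hμ'β, hpres⟩

lemma iterate (L : List (Fin d → ℤ)) :
    ∀ (μ : (Fin d → ℤ) → ℤ), Sublin μ →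
    ∃ μ', Sublin μ' ∧ (∀ a, μ' a ≤ μ a) ∧ (∀ v ∈ L, AddV μ' v) ∧
      ∀ w, AddV μ w → (μ' w = μ w ∧ AddV μ' w) := by
  induction L with
  | nil => exact fun μ hμ => ⟨μ, hμ, fun a => le_refl _, by simp, fun w hw => ⟨rfl, hw⟩⟩
  | cons v L ih =>
    intro μ hμ
    obtain ⟨μ₁, h₁, hle₁, hv₁, _, hpres₁⟩ := step μ hμ v
    obtain ⟨μ₂, h₂, hle₂, hL₂, hpres₂⟩ := ih μ₁ h₁
    refine ⟨μ₂, h₂, fun a => le_trans (hle₂ a) (hle₁ a), ?_, ?_⟩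
    · intro w hw
      rcases List.mem_cons.mp hw with rfl | hw
      · exact (hpres₂ w hv₁).2
      · exact hL₂ w hw
    · intro w hw
      obtain ⟨e1, a1⟩ := hpres₁ w hw
      obtain ⟨e2, a2⟩ := hpres₂ w a1
      exact ⟨e2.trans e1, a2⟩

lemma int_support (g : (Fin d → ℤ) → ℤ) (hg : Sublin g) (β : Fin d → ℤ) :
    ∃ v : Fin d → ℤ, (∀ b, (∑ i, v i * b i) ≤ g b) ∧ (∑ i, v i * β i) = g β := by
  classical
  obtain ⟨μ₁, h₁, hle₁, hβadd, hβval, _⟩ := step g hg β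
  obtain ⟨μ₂, h₂, hle₂, hbasis, hpres⟩ :=
    iterate ((List.finRange d).map (fun i => Pi.single i (1:ℤ))) μ₁ h₁
  obtain ⟨hβval₂, _⟩ := hpres β hβadd
  have hβ₂ : μ₂ β = g β := hβval₂.trans hβval
  have hAdd : ∀ i : Fin d, AddV μ₂ (Pi.single i (1:ℤ)) := by
    intro i
    exact hbasis _ (List.mem_map.mpr ⟨i, List.mem_finRange i, rfl⟩)
  have hz : μ₂ 0 = 0 := by
    have := h₂.2 0 0
    simpa using this
  have key : ∀ (s : Finset (Fin d)) (b : Fin d → ℤ),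
      μ₂ (∑ i ∈ s, b i • Pi.single i (1:ℤ)) = ∑ i ∈ s, b i * μ₂ (Pi.single i (1:ℤ)) := by
    intro s
    induction s using Finset.induction with
    | empty => intro b; simpa using hz
    | @insert a s ha ih =>
      intro b
      rw [Finset.sum_insert ha, Finset.sum_insert ha,
        add_comm (b a • (Pi.single a 1 : Fin d → ℤ)) _, hAdd a _ (b a), ih b]
      ring
  have hlin : ∀ b : Fin d → ℤ, μ₂ b = ∑ i, μ₂ (Pi.single i (1:ℤ)) * b i := by
    intro b
    have hsingle : ∀ i, b i • (Pi.single i 1 : Fin d → ℤ) = Pi.single i (b i) := by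
      intro i; funext j
      simp [Pi.single_apply, mul_ite]
    have hb : b = ∑ i, b i • (Pi.single i 1 : Fin d → ℤ) := by
      rw [Finset.sum_congr rfl (fun i _ => hsingle i), Finset.univ_sum_single]
    conv_lhs => rw [hb]
    rw [key]
    exact Finset.sum_congr rfl fun i _ => mul_comm _ _
  refine ⟨fun i => μ₂ (Pi.single i (1:ℤ)), fun b => ?_, ?_⟩
  · rw [← hlin b]; exact le_trans (hle₂ b) (hle₁ b)
  · rw [← hlin β, hβ₂]

end Stmt0Aux

open Stmt0Aux in
/-- A norm on ℝ^d taking integer values on ℤ^d has dual unit ball equal to the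
convex hull of finitely many integral points; in particular it is compact. -/
theorem stmt0 (d : ℕ) (x : (Fin d → ℝ) → ℝ)
    (hx0 : ∀ a, x a = 0 → a = 0)
    (hadd : ∀ a b, x (a + b) ≤ x a + x b)
    (hsmul : ∀ (t : ℝ) a, x (t • a) = |t| * x a)
    (hint : ∀ a : Fin d → ℤ, ∃ m : ℤ, x (fun i => (a i : ℝ)) = (m : ℝ)) :
    ∃ s : Finset (Fin d → ℝ),
      (∀ v ∈ s, ∀ i, ∃ m : ℤ, v i = (m : ℝ)) ∧
      {u : Fin d → ℝ | ∀ a, ∑ i, u i * a i ≤ x a} = convexHull ℝ (s : Set (Fin d → ℝ)) ∧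
      IsCompact {u : Fin d → ℝ | ∀ a, ∑ i, u i * a i ≤ x a} := by
  classical
  choose G hG using hint
  have hzero : x 0 = 0 := by have := hsmul 0 0; simpa using this
  have hneg : ∀ z, x (-z) = x z := by
    intro z; have := hsmul (-1) z; simpa using this
  have hnn : ∀ z, 0 ≤ x z := by
    intro z
    have h := hadd z (-z)
    rw [add_neg_cancel, hzero, hneg] at h
    linarith
  have hGsub : Sublin G := by
    constructor
    · intro a b
      have h := hadd (fun i => ((a i : ℤ) : ℝ)) (fun i => ((b i : ℤ) : ℝ))
      have e : (fun i => ((a i : ℤ) : ℝ)) + (fun i => ((b i : ℤ) : ℝ))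
          = fun i => (((a + b) i : ℤ) : ℝ) := by
        funext i; simp only [Pi.add_apply]; push_cast; ring
      rw [e, hG, hG, hG] at h
      exact_mod_cast h
    · intro n a
      have e : (fun i => ((((n : ℤ) • a) i : ℤ) : ℝ)) = (n : ℝ) • (fun i => ((a i : ℤ) : ℝ)) := by
        funext i; simp only [Pi.smul_apply, smul_eq_mul]; push_cast; ring
      have h := hsmul (n : ℝ) (fun i => ((a i : ℤ) : ℝ))
      rw [← e, hG, hG, abs_of_nonneg (Nat.cast_nonneg n)] at h
      exact_mod_cast h
  have hGneg : ∀ a, G (-a) = G a := by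
    intro a
    have e : (fun i => (((-a) i : ℤ) : ℝ)) = -(fun i => ((a i : ℤ) : ℝ)) := by
      funext i; simp only [Pi.neg_apply]; push_cast; ring
    have h : x (fun i => (((-a) i : ℤ) : ℝ)) = x (fun i => ((a i : ℤ) : ℝ)) := by
      rw [e, hneg]
    rw [hG, hG] at h
    exact_mod_cast h
  have hGnn : ∀ a, 0 ≤ G a := by
    intro a
    have := hnn (fun i => ((a i : ℤ) : ℝ))
    rw [hG] at this
    exact_mod_cast this
  set Ex : ℝ := ∑ i, x (Pi.single i (1:ℝ)) with hExdef
  set E : ℤ := ∑ i, G (Pi.single i (1:ℤ)) with hEdef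
  have hsingleR : ∀ (i : Fin d) (c : ℝ), (Pi.single i c : Fin d → ℝ) = c • (Pi.single i 1 : Fin d → ℝ) := by
    intro i c; funext j; simp [Pi.single_apply, mul_ite]
  have hcastsingle : ∀ i : Fin d,
      (fun j => (((Pi.single i (1:ℤ) : Fin d → ℤ) j : ℤ) : ℝ)) = (Pi.single i (1:ℝ) : Fin d → ℝ) := by
    intro i; funext j; simp [Pi.single_apply, apply_ite (fun z : ℤ => (z : ℝ))]
  have hEEx : (E : ℝ) = Ex := by
    rw [hEdef, hExdef]
    push_cast
    refine Finset.sum_congr rfl fun i _ => ?_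
    rw [← hG, hcastsingle]
  have hExnn : 0 ≤ Ex := Finset.sum_nonneg fun i _ => hnn _
  have hxsum : ∀ z : Fin d → ℝ, x z ≤ ∑ i, |z i| * x (Pi.single i (1:ℝ)) := by
    have key : ∀ s : Finset (Fin d), ∀ z : Fin d → ℝ,
        x (∑ i ∈ s, Pi.single i (z i)) ≤ ∑ i ∈ s, |z i| * x (Pi.single i 1) := by
      intro s
      induction s using Finset.induction with
      | empty => intro z; simp [hzero]
      | @insert a s ha ih =>
        intro z
        rw [Finset.sum_insert ha, Finset.sum_insert ha]
        refine le_trans (hadd _ _) ?_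
        rw [hsingleR a (z a), hsmul]
        exact add_le_add le_rfl (ih z)
    intro z
    have := key univ z
    rwa [Finset.univ_sum_single] at this
  have hcoord : ∀ v : Fin d → ℤ, (∀ b, ∑ i, v i * b i ≤ G b) → ∀ i, |v i| ≤ G (Pi.single i 1) := by
    intro v hv i
    have h1 := hv (Pi.single i 1)
    have h2 := hv (-Pi.single i 1)
    have e1 : ∑ j, v j * (Pi.single i 1 : Fin d → ℤ) j = v i := by
      simp [Pi.single_apply, mul_ite]
    have e2 : ∑ j, v j * (-Pi.single i 1 : Fin d → ℤ) j = -v i := by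
      simp [Pi.single_apply, mul_ite]
    rw [e1] at h1
    rw [e2, hGneg] at h2
    exact abs_le.mpr ⟨by omega, h1⟩
  have hpair : ∀ v : Fin d → ℤ, (∀ b, ∑ i, v i * b i ≤ G b) →
      ∑ i, |((v i : ℤ) : ℝ)| ≤ (E : ℝ) := by
    intro v hv
    have h : ∑ i, |v i| ≤ E := by
      rw [hEdef]
      exact Finset.sum_le_sum fun i _ => hcoord v hv i
    exact_mod_cast h
  have hfl : ∀ (z : Fin d → ℝ) (n : ℕ) (i : Fin d),
      |(n:ℝ) * z i - (⌊(n:ℝ) * z i⌋ : ℝ)| ≤ 1 := by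
    intro z n i
    rw [abs_le]
    constructor
    · linarith [Int.floor_le ((n:ℝ) * z i)]
    · linarith [Int.lt_floor_add_one ((n:ℝ) * z i)]
  -- upper bound: any integer dual vector is (asymptotically) dominated by x
  have hup : ∀ v : Fin d → ℤ, (∀ b, ∑ i, v i * b i ≤ G b) → ∀ (z : Fin d → ℝ) (n : ℕ),
      (n:ℝ) * (∑ i, (v i : ℝ) * z i) ≤ (n:ℝ) * x z + 2 * Ex := by
    intro v hv z n
    set β : Fin d → ℤ := fun i => ⌊(n:ℝ) * z i⌋ with hβ
    have habs : ∑ i, |((v i : ℤ) : ℝ)| ≤ (E : ℝ) := hpair v hv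
    have e0 : (n:ℝ) * (∑ i, (v i : ℝ) * z i)
        = (∑ i, (v i : ℝ) * (β i : ℝ)) + ∑ i, (v i : ℝ) * ((n:ℝ) * z i - (β i : ℝ)) := by
      rw [Finset.mul_sum, ← Finset.sum_add_distrib]
      exact Finset.sum_congr rfl fun i _ => by ring
    have e1 : (∑ i, (v i : ℝ) * (β i : ℝ)) ≤ (G β : ℝ) := by exact_mod_cast hv β
    have e2 : ∑ i, (v i : ℝ) * ((n:ℝ) * z i - (β i : ℝ)) ≤ ∑ i, |((v i : ℤ) : ℝ)| := by
      refine Finset.sum_le_sum fun i _ => ?_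
      calc (v i : ℝ) * ((n:ℝ) * z i - (β i : ℝ)) ≤ |(v i : ℝ) * ((n:ℝ) * z i - (β i : ℝ))| :=
            le_abs_self _
        _ = |(v i : ℝ)| * |(n:ℝ) * z i - (β i : ℝ)| := abs_mul _ _
        _ ≤ |(v i : ℝ)| * 1 := mul_le_mul_of_nonneg_left (hfl z n i) (abs_nonneg _)
        _ = |(v i : ℝ)| := mul_one _
    have e3 : (G β : ℝ) ≤ (n:ℝ) * x z + Ex := by
      have hGx : (G β : ℝ) = x (fun i => (β i : ℝ)) := (hG β).symm
      have hdec : (fun i => (β i : ℝ)) = (n:ℝ) • z + ((fun i => (β i : ℝ)) - (n:ℝ) • z) := by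
        rw [add_sub_cancel]
      have h4 := hadd ((n:ℝ) • z) ((fun i => (β i : ℝ)) - (n:ℝ) • z)
      have h5 : x ((n:ℝ) • z) = (n:ℝ) * x z := by
        rw [hsmul, abs_of_nonneg (Nat.cast_nonneg n)]
      have h6 : x ((fun i => (β i : ℝ)) - (n:ℝ) • z) ≤ Ex := by
        refine le_trans (hxsum _) ?_
        rw [hExdef]
        refine Finset.sum_le_sum fun i _ => ?_
        have : |((fun i => (β i : ℝ)) - (n:ℝ) • z) i| ≤ 1 := by
          simp only [Pi.sub_apply, Pi.smul_apply, smul_eq_mul]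
          rw [abs_sub_comm]
          exact hfl z n i
        calc |((fun i => (β i : ℝ)) - (n:ℝ) • z) i| * x (Pi.single i 1)
            ≤ 1 * x (Pi.single i 1) := mul_le_mul_of_nonneg_right this (hnn _)
          _ = x (Pi.single i 1) := one_mul _
      rw [hGx, hdec]
      exact le_trans h4 (by rw [h5]; linarith)
    have hEEx' : (E:ℝ) ≤ Ex := le_of_eq hEEx
    linarith
  -- lower bound: integer support vectors
  have hsup : ∀ (z : Fin d → ℝ) (n : ℕ), ∃ v : Fin d → ℤ,
      (∀ b, ∑ i, v i * b i ≤ G b) ∧ (n:ℝ) * x z - 2 * Ex ≤ (n:ℝ) * (∑ i, (v i : ℝ) * z i) := by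
    intro z n
    set β : Fin d → ℤ := fun i => ⌊(n:ℝ) * z i⌋ with hβ
    obtain ⟨v, hv, hvβ⟩ := int_support G hGsub β
    refine ⟨v, hv, ?_⟩
    have habs : ∑ i, |((v i : ℤ) : ℝ)| ≤ (E : ℝ) := hpair v hv
    have e0 : (n:ℝ) * (∑ i, (v i : ℝ) * z i)
        = (∑ i, (v i : ℝ) * (β i : ℝ)) + ∑ i, (v i : ℝ) * ((n:ℝ) * z i - (β i : ℝ)) := by
      rw [Finset.mul_sum, ← Finset.sum_add_distrib]
      exact Finset.sum_congr rfl fun i _ => by ring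
    have e1 : (∑ i, (v i : ℝ) * (β i : ℝ)) = (G β : ℝ) := by exact_mod_cast hvβ
    have e2 : -(∑ i, |((v i : ℤ) : ℝ)|) ≤ ∑ i, (v i : ℝ) * ((n:ℝ) * z i - (β i : ℝ)) := by
      rw [← Finset.sum_neg_distrib]
      refine Finset.sum_le_sum fun i _ => ?_
      calc -|(v i : ℝ)| = -(|(v i : ℝ)| * 1) := by ring
        _ ≤ -(|(v i : ℝ)| * |(n:ℝ) * z i - (β i : ℝ)|) := by
            have := mul_le_mul_of_nonneg_left (hfl z n i) (abs_nonneg (v i : ℝ))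
            linarith
        _ = -|(v i : ℝ) * ((n:ℝ) * z i - (β i : ℝ))| := by rw [abs_mul]
        _ ≤ (v i : ℝ) * ((n:ℝ) * z i - (β i : ℝ)) := neg_abs_le _
    have e3 : (n:ℝ) * x z - Ex ≤ (G β : ℝ) := by
      have hGx : (G β : ℝ) = x (fun i => (β i : ℝ)) := (hG β).symm
      have hdec : (n:ℝ) • z = (fun i => (β i : ℝ)) + ((n:ℝ) • z - (fun i => (β i : ℝ))) := by
        rw [add_sub_cancel]
      have h4 := hadd (fun i => (β i : ℝ)) ((n:ℝ) • z - (fun i => (β i : ℝ)))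
      have h5 : x ((n:ℝ) • z) = (n:ℝ) * x z := by
        rw [hsmul, abs_of_nonneg (Nat.cast_nonneg n)]
      have h6 : x ((n:ℝ) • z - (fun i => (β i : ℝ))) ≤ Ex := by
        refine le_trans (hxsum _) ?_
        rw [hExdef]
        refine Finset.sum_le_sum fun i _ => ?_
        have : |((n:ℝ) • z - (fun i => (β i : ℝ))) i| ≤ 1 := by
          simp only [Pi.sub_apply, Pi.smul_apply, smul_eq_mul]
          exact hfl z n i
        calc |((n:ℝ) • z - (fun i => (β i : ℝ))) i| * x (Pi.single i 1)
            ≤ 1 * x (Pi.single i 1) := mul_le_mul_of_nonneg_right this (hnn _)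
          _ = x (Pi.single i 1) := one_mul _
      rw [← hdec] at h4
      rw [hGx]
      linarith
    have hEEx' : (E:ℝ) ≤ Ex := le_of_eq hEEx
    linarith
  -- archimedean limit
  have arch : ∀ A B : ℝ, (∀ n : ℕ, (n:ℝ) * A ≤ (n:ℝ) * B + 2 * Ex) → A ≤ B := by
    intro A B h
    by_contra hc
    push_neg at hc
    obtain ⟨n, hn⟩ := exists_nat_gt (2 * Ex / (A - B))
    have hAB : 0 < A - B := by linarith
    have h2 : 2 * Ex < (n:ℝ) * (A - B) := by
      rwa [div_lt_iff₀ hAB] at hn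
    have := h n
    nlinarith
  -- membership of integer dual vectors in B
  have hBmem : ∀ v : Fin d → ℤ, (∀ b, ∑ i, v i * b i ≤ G b) →
      (fun i => ((v i : ℤ) : ℝ)) ∈ {u : Fin d → ℝ | ∀ a, ∑ i, u i * a i ≤ x a} := by
    intro v hv
    intro z
    exact arch _ _ (fun n => hup v hv z n)
  -- the finite set of integer points of the dual ball
  have hSfin : {a : Fin d → ℤ | ∀ b, ∑ i, a i * b i ≤ G b}.Finite := by
    refine Set.Finite.subset (Set.finite_Icc (fun _ => -E) (fun _ => E)) ?_
    intro a ha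
    have hb : ∀ i, |a i| ≤ G (Pi.single i 1) := hcoord a ha
    have hE : ∀ i : Fin d, G (Pi.single i 1) ≤ E := by
      intro i
      rw [hEdef]
      exact Finset.single_le_sum (fun j _ => hGnn _) (Finset.mem_univ i)
    constructor
    · intro i
      have h1 := hb i; have h2 := hE i
      simp only [abs_le] at h1
      simpa using (by omega : -E ≤ a i)
    · intro i
      have h1 := hb i; have h2 := hE i
      simp only [abs_le] at h1
      simpa using (by omega : a i ≤ E)
  set s : Finset (Fin d → ℝ) :=
    hSfin.toFinset.image (fun a => (fun i => ((a i : ℤ) : ℝ))) with hsdef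
  have hsmem : ∀ v : Fin d → ℤ, (∀ b, ∑ i, v i * b i ≤ G b) →
      (fun i => ((v i : ℤ) : ℝ)) ∈ (s : Set (Fin d → ℝ)) := by
    intro v hv
    rw [hsdef]
    simp only [Finset.coe_image, Set.mem_image, Set.Finite.coe_toFinset]
    exact ⟨v, hv, rfl⟩
  -- the hull equality
  have hBeq : {u : Fin d → ℝ | ∀ a, ∑ i, u i * a i ≤ x a} = convexHull ℝ (s : Set (Fin d → ℝ)) := by
    apply Set.Subset.antisymm
    · -- hard direction via separation
      intro u hu
      by_contra hcon
      have hconv : Convex ℝ (convexHull ℝ (s : Set (Fin d → ℝ))) := convex_convexHull ℝ _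
      have hclosed : IsClosed (convexHull ℝ (s : Set (Fin d → ℝ))) :=
        (Set.Finite.isCompact_convexHull (𝕜 := ℝ) s.finite_toSet).isClosed
      obtain ⟨f, u0, hfs, hfu⟩ := geometric_hahn_banach_closed_point hconv hclosed hcon
      set z : Fin d → ℝ := fun i => f (Pi.single i (1:ℝ)) with hz
      have hrep : ∀ w : Fin d → ℝ, f w = ∑ i, w i * z i := by
        intro w
        conv_lhs => rw [← Finset.univ_sum_single w]
        rw [map_sum]
        refine Finset.sum_congr rfl fun i _ => ?_
        rw [hsingleR i (w i), map_smul, smul_eq_mul]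
      have h1 : f u ≤ x z := by
        rw [hrep]
        exact hu z
      have h2 : x z ≤ u0 := by
        refine arch _ _ fun n => ?_
        obtain ⟨v, hv, hlow⟩ := hsup z n
        have hmem : (fun i => ((v i : ℤ) : ℝ)) ∈ convexHull ℝ (s : Set (Fin d → ℝ)) :=
          subset_convexHull ℝ _ (hsmem v hv)
        have hflt := hfs _ hmem
        rw [hrep] at hflt
        have := mul_le_mul_of_nonneg_left (le_of_lt hflt) (Nat.cast_nonneg (α := ℝ) n)
        linarith
      linarith
    · refine convexHull_min ?_ ?_
      · intro y hy
        rw [hsdef] at hy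
        simp only [Finset.coe_image, Set.mem_image, Set.Finite.coe_toFinset] at hy
        obtain ⟨a, ha, rfl⟩ := hy
        exact hBmem a ha
      · intro u hu w hw p q hp hq hpq
        intro a
        have h1 := hu a
        have h2 := hw a
        have e : ∑ i, (p • u + q • w) i * a i
            = p * (∑ i, u i * a i) + q * (∑ i, w i * a i) := by
          rw [Finset.mul_sum, Finset.mul_sum, ← Finset.sum_add_distrib]
          refine Finset.sum_congr rfl fun i _ => ?_
          simp only [Pi.add_apply, Pi.smul_apply, smul_eq_mul]
          ring
        rw [e]
        calc p * (∑ i, u i * a i) + q * (∑ i, w i * a i)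
            ≤ p * x a + q * x a :=
              add_le_add (mul_le_mul_of_nonneg_left h1 hp) (mul_le_mul_of_nonneg_left h2 hq)
          _ = x a := by rw [← add_mul, hpq, one_mul]
  refine ⟨s, ?_, hBeq, ?_⟩
  · intro v hv i
    rw [hsdef] at hv
    simp only [Finset.mem_image, Set.Finite.mem_toFinset] at hv
    obtain ⟨a, _, rfl⟩ := hv
    exact ⟨a i, rfl⟩
  · rw [hBeq]
    exact Set.Finite.isCompact_convexHull (𝕜 := ℝ) s.finite_toSet
end

section
/- Let x be a norm on ℝ^d with unit ball B_x and dual norm x* with unit ball B_{x*}. For an extreme point (vertex) w of B_{x*}, the dual face C = {a ∈ B_x : ⟨w,a⟩ = 1} is a face of B_x, and for any a in the relative interior of C, w is the unique point u of B_{x*} with ⟨u, a⟩ = x(a) = 1 — provided C is top-dimensional (of dimension d−1). -/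
section aux

variable {d : ℕ}

private lemma pr_add {u a b : Fin d → ℝ} :
    ∑ i, u i * (a + b) i = (∑ i, u i * a i) + ∑ i, u i * b i := by
  simp [mul_add, Finset.sum_add_distrib]

private lemma pr_smul {u : Fin d → ℝ} {t : ℝ} {a : Fin d → ℝ} :
    ∑ i, u i * (t • a) i = t * ∑ i, u i * a i := by
  simp [Finset.mul_sum, smul_eq_mul]
  exact Finset.sum_congr rfl fun i _ => by ring

private lemma pr_sub {u : Fin d → ℝ} {a b : Fin d → ℝ} :
    ∑ i, u i * (a - b) i = (∑ i, u i * a i) - ∑ i, u i * b i := by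
  simp [mul_sub, Finset.sum_sub_distrib]

/-- key relative-interior lemma -/
private lemma key_intrinsic {C : Set (Fin d → ℝ)} {a : Fin d → ℝ}
    (ha : a ∈ intrinsicInterior ℝ C) {v : Fin d → ℝ}
    (hv : v ∈ (affineSpan ℝ C).direction) :
    ∃ ε : ℝ, 0 < ε ∧ a + ε • v ∈ C ∧ a - ε • v ∈ C := by
  obtain ⟨p, hp, hpa⟩ := ha
  have haC : a ∈ C := intrinsicInterior_subset ⟨p, hp, hpa⟩
  have haspan : a ∈ affineSpan ℝ C := subset_affineSpan ℝ C haC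
  have hmem : ∀ t : ℝ, a + t • v ∈ affineSpan ℝ C := by
    intro t
    have := AffineSubspace.vadd_mem_of_mem_direction
      (Submodule.smul_mem _ t hv) haspan
    simpa [vadd_eq_add, add_comm] using this
  set g : ℝ → (affineSpan ℝ C) := fun t => ⟨a + t • v, hmem t⟩ with hg
  have hgc : Continuous g := by
    apply Continuous.subtype_mk
    exact continuous_const.add (continuous_id.smul continuous_const)
  have h0 : g 0 ∈ interior ((↑) ⁻¹' C : Set (affineSpan ℝ C)) := by
    have : g 0 = p := Subtype.ext (by simp [g, hpa])
    rw [this]; exact hp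
  have hopen : IsOpen (g ⁻¹' interior ((↑) ⁻¹' C : Set (affineSpan ℝ C))) :=
    isOpen_interior.preimage hgc
  obtain ⟨ε, hε, hball⟩ := Metric.isOpen_iff.mp hopen 0 h0
  have hmemball : ∀ t : ℝ, |t| < ε → a + t • v ∈ C := by
    intro t ht
    have htb : t ∈ Metric.ball (0 : ℝ) ε := by
      simpa [Real.dist_eq] using ht
    have h2 : g t ∈ interior ((↑) ⁻¹' C : Set (affineSpan ℝ C)) := hball htb
    have h3 : g t ∈ ((↑) ⁻¹' C : Set (affineSpan ℝ C)) := interior_subset h2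
    exact h3
  refine ⟨ε / 2, by positivity, ?_, ?_⟩
  · exact hmemball _ (by rw [abs_of_pos (by positivity)]; linarith)
  · have := hmemball (-(ε / 2)) (by rw [abs_neg, abs_of_pos (by positivity)]; linarith)
    simpa [neg_smul, sub_eq_add_neg] using this

end aux

/-- Let x be a norm on ℝ^d with unit ball B_x and dual unit ball
B_{x*} = {u | ⟨u,a⟩ ≤ x(a) for all a}.  For an extreme point (vertex) w of B_{x*},
the dual face C = {a ∈ B_x : ⟨w,a⟩ = 1} is a face (extreme subset) of B_x; and if C
is top-dimensional (of dimension d−1) and a lies in the relative interior of C, then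
w is the unique u ∈ B_{x*} with ⟨u,a⟩ = 1. -/
theorem stmt19 (d : ℕ) (x : (Fin d → ℝ) → ℝ)
    (hx0 : ∀ a, x a = 0 → a = 0)
    (hadd : ∀ a b, x (a + b) ≤ x a + x b)
    (hsmul : ∀ (t : ℝ) a, x (t • a) = |t| * x a)
    (w : Fin d → ℝ)
    (hwext : w ∈ Set.extremePoints ℝ {u : Fin d → ℝ | ∀ a, ∑ i, u i * a i ≤ x a})
    (C : Set (Fin d → ℝ))
    (hC : C = {a : Fin d → ℝ | x a ≤ 1 ∧ ∑ i, w i * a i = 1})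
    (hCdim : Module.finrank ℝ (affineSpan ℝ C).direction = d - 1)
    (a : Fin d → ℝ) (ha : a ∈ intrinsicInterior ℝ C) :
    IsExtreme ℝ {b : Fin d → ℝ | x b ≤ 1} C ∧
    ∀ u : Fin d → ℝ, (∀ b, ∑ i, u i * b i ≤ x b) → (∑ i, u i * a i = 1) → u = w := by
  have hw : ∀ b, ∑ i, w i * b i ≤ x b := hwext.1
  have haC : a ∈ C := intrinsicInterior_subset ha
  have hwa : ∑ i, w i * a i = 1 := by rw [hC] at haC; exact haC.2
  -- Part 1
  have part1 : IsExtreme ℝ {b : Fin d → ℝ | x b ≤ 1} C := by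
    constructor
    · intro b hb; rw [hC] at hb; exact hb.1
    · intro b₁ hb₁ b₂ hb₂ c hcC hseg
      obtain ⟨t, s, ht, hs, hts, rfl⟩ := hseg
      rw [hC] at hcC
      have hsum : t * (∑ i, w i * b₁ i) + s * (∑ i, w i * b₂ i) = 1 := by
        have := hcC.2
        rw [pr_add, pr_smul, pr_smul] at this
        exact this
      have h1 : ∑ i, w i * b₁ i ≤ 1 := le_trans (hw b₁) hb₁
      have h2 : ∑ i, w i * b₂ i ≤ 1 := le_trans (hw b₂) hb₂
      have e1 : ∑ i, w i * b₁ i = 1 := by nlinarith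
      have e2 : ∑ i, w i * b₂ i = 1 := by nlinarith
      rw [hC]
      exact ⟨hb₁, e1⟩
  refine ⟨part1, ?_⟩
  intro u hu hua
  -- w and u both vanish on the direction
  have hdir : ∀ v ∈ (affineSpan ℝ C).direction,
      (∑ i, w i * v i = 0) ∧ (∑ i, u i * v i = 0) := by
    intro v hv
    obtain ⟨ε, hε, hplus, hminus⟩ := key_intrinsic ha hv
    rw [hC] at hplus hminus
    have hwp : (∑ i, w i * a i) + ε * ∑ i, w i * v i = 1 := by
      have := hplus.2; rw [pr_add, pr_smul] at this; exact this
    have hup : (∑ i, u i * a i) + ε * ∑ i, u i * v i ≤ 1 := by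
      have := le_trans (hu _) hplus.1
      rw [pr_add, pr_smul] at this; exact this
    have hum : (∑ i, u i * a i) - ε * ∑ i, u i * v i ≤ 1 := by
      have := le_trans (hu _) hminus.1
      rw [pr_sub, pr_smul] at this; exact this
    constructor
    · have : ε * ∑ i, w i * v i = 0 := by linarith [hwa]
      rcases mul_eq_zero.mp this with h | h
      · exact absurd h (ne_of_gt hε)
      · exact h
    · nlinarith
  -- the linear functional given by u - w
  set z : Fin d → ℝ := u - w with hz
  have hzdir : ∀ v ∈ (affineSpan ℝ C).direction, ∑ i, z i * v i = 0 := by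
    intro v hv
    have h := hdir v hv
    have : ∑ i, (u - w) i * v i = (∑ i, u i * v i) - ∑ i, w i * v i := by
      simp [sub_mul, Finset.sum_sub_distrib]
    rw [hz, this, h.1, h.2]; ring
  have hza : ∑ i, z i * a i = 0 := by
    have : ∑ i, (u - w) i * a i = (∑ i, u i * a i) - ∑ i, w i * a i := by
      simp [sub_mul, Finset.sum_sub_distrib]
    rw [hz, this, hua, hwa]; ring
  -- d ≥ 1 and a ≠ 0
  have ha0 : a ≠ 0 := by
    intro h; rw [h] at hwa; simp at hwa
  have hd : 0 < d := by
    by_contra h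
    push_neg at h
    interval_cases d
    · exact ha0 (Subsingleton.elim _ _)
  -- a ∉ direction
  have hanot : a ∉ (affineSpan ℝ C).direction := by
    intro h
    have := (hdir a h).1
    rw [hwa] at this; norm_num at this
  -- the linear functional
  set φ : (Fin d → ℝ) →ₗ[ℝ] ℝ :=
    { toFun := fun b => ∑ i, z i * b i
      map_add' := fun b c => pr_add
      map_smul' := fun t b => pr_smul } with hφ
  have hsupeq : (affineSpan ℝ C).direction ⊔ Submodule.span ℝ {a} = ⊤ := by
    apply Submodule.eq_top_of_finrank_eq
    have hdisj : (affineSpan ℝ C).direction ⊓ Submodule.span ℝ {a} = ⊥ := by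
      rw [Submodule.eq_bot_iff]
      rintro y ⟨hy1, hy2⟩
      obtain ⟨t, rfl⟩ := Submodule.mem_span_singleton.mp hy2
      have := (hdir _ hy1).1
      rw [pr_smul, hwa] at this
      simp at this
      rw [this, zero_smul]
    have := Submodule.finrank_sup_add_finrank_inf_eq
      (affineSpan ℝ C).direction (Submodule.span ℝ {a})
    rw [hdisj, hCdim, finrank_span_singleton ha0] at this
    simp at this
    rw [this, Nat.sub_add_cancel hd]
    simp [Module.finrank_fintype_fun_eq_card]
  have hφtop : ∀ b, φ b = 0 := by
    have hker : (affineSpan ℝ C).direction ⊔ Submodule.span ℝ {a} ≤ LinearMap.ker φ := by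
      apply sup_le
      · intro v hv; exact hzdir v hv
      · rw [Submodule.span_le, Set.singleton_subset_iff]
        exact hza
    intro b
    have : b ∈ LinearMap.ker φ := hker (hsupeq ▸ Submodule.mem_top)
    exact this
  have hzz : ∑ i, z i * z i = 0 := hφtop z
  have hz0 : z = 0 := by
    funext i
    have hsq : ∀ j ∈ Finset.univ, (0:ℝ) ≤ z j * z j := fun j _ => mul_self_nonneg _
    have := (Finset.sum_eq_zero_iff_of_nonneg hsq).mp hzz i (Finset.mem_univ i)
    exact mul_self_eq_zero.mp this
  have : u - w = 0 := hz0
  exact sub_eq_zero.mp this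
end
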